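/- arXiv:1408.3704 — 5 statements merged into one kernel-verified Lean document; each statement's English description precedes it below -/
import Mathlib

section
/- (Lemma 1) Suppose g : ℝ → ℝ is odd and strictly increasing, and h : ℝ → ℝ is strictly increasing. If x ∈ ℝ^N is not a constant vector (i.e., x ∉ B), then xᵀ M μ(x) > 0. -/
open Matrix

/-- The vector field `μ(x)_i = ∑_{j ∈ N_i} g (h (x i) - h (x j))`. -/
def muVec {N : ℕ} (G : SimpleGraph (Fin N)) [DecidableRel G.Adj] (g h : ℝ → ℝ)
    (x : Fin N → ℝ) : Fin N → ℝ :=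
  fun i => ∑ j ∈ G.neighborFinset i, g (h (x i) - h (x j))

/-- The matrix `M = N·I − 1·1ᵀ`, the Laplacian of the complete graph on `N` vertices. -/
def Mmat (N : ℕ) : Matrix (Fin N) (Fin N) ℝ :=
  (N : ℝ) • (1 : Matrix (Fin N) (Fin N) ℝ) - Matrix.of fun _ _ => (1 : ℝ)

lemma swap_sum {N : ℕ} (G : SimpleGraph (Fin N)) [DecidableRel G.Adj]
    (f : Fin N → Fin N → ℝ) :
    ∑ i, ∑ j ∈ G.neighborFinset i, f i j = ∑ i, ∑ j ∈ G.neighborFinset i, f j i := by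
  have key : ∀ u : Fin N → Fin N → ℝ,
      ∑ i, ∑ j ∈ G.neighborFinset i, u i j
        = ∑ i, ∑ j, if G.Adj i j then u i j else 0 := by
    intro u
    refine Finset.sum_congr rfl fun i _ => ?_
    rw [SimpleGraph.neighborFinset_eq_filter, Finset.sum_filter]
  rw [key, key, Finset.sum_comm]
  refine Finset.sum_congr rfl fun i _ => Finset.sum_congr rfl fun j _ => ?_
  by_cases hij : G.Adj i j
  · simp [hij, hij.symm]
  · have : ¬ G.Adj j i := fun hji => hij hji.symm
    simp [hij, this]

lemma sign_lemma (g h : ℝ → ℝ) (hgodd : ∀ y : ℝ, g (-y) = -g y)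
    (hgmono : StrictMono g) (hhmono : StrictMono h) (u v : ℝ) :
    0 ≤ (u - v) * g (h u - h v) ∧ (u ≠ v → 0 < (u - v) * g (h u - h v)) := by
  have hg0 : g 0 = 0 := by have := hgodd 0; simp at this; linarith
  rcases lt_trichotomy u v with hlt | heq | hgt
  · have h1 : h u < h v := hhmono hlt
    have h2 : g (h u - h v) < 0 := by
      have := hgmono (show h u - h v < 0 by linarith); rwa [hg0] at this
    have : 0 < (u - v) * g (h u - h v) :=
      mul_pos_of_neg_of_neg (by linarith) h2
    exact ⟨le_of_lt this, fun _ => this⟩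
  · subst heq
    constructor
    · simp [hg0]
    · intro hne; exact absurd rfl hne
  · have h1 : h v < h u := hhmono hgt
    have h2 : 0 < g (h u - h v) := by
      have := hgmono (show (0:ℝ) < h u - h v by linarith); rwa [hg0] at this
    have : 0 < (u - v) * g (h u - h v) := mul_pos (by linarith) h2
    exact ⟨le_of_lt this, fun _ => this⟩

lemma walk_const {N : ℕ} {G : SimpleGraph (Fin N)} (x : Fin N → ℝ)
    (hxadj : ∀ i j, G.Adj i j → x i = x j) :
    ∀ {a b : Fin N}, G.Walk a b → x a = x b := by
  intro a b w
  induction w with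
  | nil => rfl
  | cons hadj _ ih => exact (hxadj _ _ hadj).trans ih

/-- Lemma 1: if `g` is odd and strictly increasing, `h` is strictly
increasing, and `x ∈ ℝ^N` is not a constant vector (not in the consensus subspace
`B = {a·1 : a ∈ ℝ}`), then `xᵀ M μ(x) > 0`. -/
theorem stmt2 (N : ℕ) (hN : 2 ≤ N) (G : SimpleGraph (Fin N)) [DecidableRel G.Adj]
    (hconn : G.Connected) (g h : ℝ → ℝ) (hgodd : ∀ y : ℝ, g (-y) = -g y)
    (hgmono : StrictMono g) (hhmono : StrictMono h)
    (x : Fin N → ℝ) (hx : x ∉ {y : Fin N → ℝ | ∃ a : ℝ, y = fun _ => a}) :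
    0 < x ⬝ᵥ (Mmat N *ᵥ muVec G g h x) := by
  set μ := muVec G g h x with hμ
  -- there exists an edge with different x-values
  have hedge : ∃ i j, G.Adj i j ∧ x i ≠ x j := by
    by_contra hcon
    push_neg at hcon
    have hxadj : ∀ i j, G.Adj i j → x i = x j := fun i j hij => hcon i j hij
    apply hx
    have hN0 : 0 < N := by omega
    refine ⟨x ⟨0, hN0⟩, ?_⟩
    funext i
    obtain ⟨w⟩ := hconn.preconnected ⟨0, hN0⟩ i
    exact (walk_const x hxadj w).symm
  -- sum of μ is zero
  have hSμ : ∑ i, μ i = 0 := by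
    have hswap := swap_sum G (fun i j => g (h (x i) - h (x j)))
    have hneg : ∑ i, ∑ j ∈ G.neighborFinset i, g (h (x j) - h (x i))
        = -∑ i, ∑ j ∈ G.neighborFinset i, g (h (x i) - h (x j)) := by
      rw [← Finset.sum_neg_distrib]
      refine Finset.sum_congr rfl fun i _ => ?_
      rw [← Finset.sum_neg_distrib]
      refine Finset.sum_congr rfl fun j _ => ?_
      rw [show h (x j) - h (x i) = -(h (x i) - h (x j)) by ring, hgodd]
    have : ∑ i, μ i = ∑ i, ∑ j ∈ G.neighborFinset i, g (h (x i) - h (x j)) := rfl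
    rw [this]
    linarith [hswap, hneg, hswap.trans hneg]
  -- x ⬝ μ is half of T
  set T := ∑ i, ∑ j ∈ G.neighborFinset i, (x i - x j) * g (h (x i) - h (x j)) with hT
  have hP : 2 * (x ⬝ᵥ μ) = T := by
    have e1 : x ⬝ᵥ μ = ∑ i, ∑ j ∈ G.neighborFinset i, x i * g (h (x i) - h (x j)) := by
      simp only [dotProduct, hμ, muVec, Finset.mul_sum]
    have hswap := swap_sum G (fun i j => x j * g (h (x i) - h (x j)))
    have hneg : ∑ i, ∑ j ∈ G.neighborFinset i, x i * g (h (x j) - h (x i))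
        = -∑ i, ∑ j ∈ G.neighborFinset i, x i * g (h (x i) - h (x j)) := by
      rw [← Finset.sum_neg_distrib]
      refine Finset.sum_congr rfl fun i _ => ?_
      rw [← Finset.sum_neg_distrib]
      refine Finset.sum_congr rfl fun j _ => ?_
      rw [show h (x j) - h (x i) = -(h (x i) - h (x j)) by ring, hgodd]; ring
    have e2 : T = ∑ i, ∑ j ∈ G.neighborFinset i, x i * g (h (x i) - h (x j))
        - ∑ i, ∑ j ∈ G.neighborFinset i, x j * g (h (x i) - h (x j)) := by
      rw [hT, ← Finset.sum_sub_distrib]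
      refine Finset.sum_congr rfl fun i _ => ?_
      rw [← Finset.sum_sub_distrib]
      refine Finset.sum_congr rfl fun j _ => ?_
      ring
    rw [e1, e2]
    linarith [hswap, hneg]
  -- T > 0
  have hTpos : 0 < T := by
    obtain ⟨i0, j0, hadj, hne⟩ := hedge
    refine Finset.sum_pos' (fun i _ => Finset.sum_nonneg fun j _ =>
      (sign_lemma g h hgodd hgmono hhmono (x i) (x j)).1) ⟨i0, Finset.mem_univ i0, ?_⟩
    refine Finset.sum_pos' (fun j _ =>
      (sign_lemma g h hgodd hgmono hhmono (x i0) (x j)).1) ⟨j0, ?_, ?_⟩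
    · rwa [SimpleGraph.mem_neighborFinset]
    · exact (sign_lemma g h hgodd hgmono hhmono (x i0) (x j0)).2 hne
  -- final computation
  have hmul : x ⬝ᵥ (Mmat N *ᵥ μ) = (N : ℝ) * (x ⬝ᵥ μ) - (∑ i, x i) * (∑ i, μ i) := by
    have hentry : ∀ i, (Mmat N *ᵥ μ) i = (N : ℝ) * μ i - ∑ j, μ j := by
      intro i
      simp only [Mmat, mulVec, dotProduct, Matrix.sub_apply, Matrix.smul_apply,
        Matrix.one_apply, Matrix.of_apply, smul_eq_mul, sub_mul, one_mul]
      rw [Finset.sum_sub_distrib]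
      congr 1
      simp [mul_ite, ite_mul, Finset.sum_ite_eq]
    simp only [dotProduct, hentry]
    rw [Finset.mul_sum, Finset.sum_mul, ← Finset.sum_sub_distrib]
    refine Finset.sum_congr rfl fun i _ => ?_
    ring
  rw [hmul, hSμ]
  have hNpos : (0:ℝ) < N := by positivity
  nlinarith [hTpos, hP]
end

section
/- Suppose g : ℝ → ℝ is odd and strictly increasing, and h : ℝ → ℝ is strictly increasing. Then μ(a·1) = 0 for every a ∈ ℝ, and μ(x) ≠ 0 for every x ∈ ℝ^N that is not a constant vector (x ∉ B). -/
/-- if `g` is odd and strictly increasing and `h` is strictly increasing,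
then `μ(a·1) = 0` for every `a ∈ ℝ`, and `μ(x) ≠ 0` for every `x ∈ ℝ^N` that is not a
constant vector (i.e. `x ∉ B = {a·1 : a ∈ ℝ}`). -/
theorem stmt3 (N : ℕ) (hN : 2 ≤ N) (G : SimpleGraph (Fin N)) [DecidableRel G.Adj]
    (hconn : G.Connected) (g h : ℝ → ℝ) (hgodd : ∀ y : ℝ, g (-y) = -g y)
    (hgmono : StrictMono g) (hhmono : StrictMono h) :
    (∀ a : ℝ, muVec G g h (fun _ => a) = 0) ∧
    (∀ x : Fin N → ℝ, x ∉ {y : Fin N → ℝ | ∃ a : ℝ, y = fun _ => a} →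
      muVec G g h x ≠ 0) := by
  have hg0 : g 0 = 0 := by
    have := hgodd 0
    simp at this
    linarith [this]
  constructor
  · intro a
    funext i
    simp [muVec, hg0]
  · intro x hx hzero
    haveI : Nonempty (Fin N) := ⟨⟨0, by omega⟩⟩
    -- take a vertex achieving the max
    obtain ⟨i0, hi0⟩ := Finset.exists_max_image Finset.univ x ⟨Classical.arbitrary _, Finset.mem_univ _⟩
    set M := x i0 with hM
    -- x is not constant: some vertex has x v ≠ M
    have hne : ∃ v, x v ≠ M := by
      by_contra hc
      push_neg at hc
      exact hx ⟨M, funext fun v => hc v⟩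
    obtain ⟨v, hv⟩ := hne
    have hvS : v ∉ {w : Fin N | x w = M} := hv
    obtain ⟨p⟩ := hconn.preconnected i0 v
    obtain ⟨d, hd, hdfst, hdsnd⟩ := p.exists_boundary_dart {w : Fin N | x w = M} (by simp [hM]) hvS
    have hadj : G.Adj d.fst d.snd := d.adj
    have hfst : x d.fst = M := hdfst
    have hle : ∀ j, x j ≤ M := fun j => hi0.2 j (Finset.mem_univ _)
    have hsndlt : x d.snd < M := lt_of_le_of_ne (hle _) hdsnd
    -- μ(x)_{d.fst} > 0
    have hpos : 0 < muVec G g h x d.fst := by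
      apply Finset.sum_pos'
      · intro j hj
        have : h (x j) ≤ h (x d.fst) := hhmono.monotone (hfst ▸ hle j)
        have := hgmono.monotone (sub_nonneg.mpr this)
        simpa [hg0] using this
      · refine ⟨d.snd, ?_, ?_⟩
        · simp [SimpleGraph.mem_neighborFinset, hadj]
        · have : h (x d.snd) < h (x d.fst) := hhmono (hfst ▸ hsndlt)
          have := hgmono (sub_pos.mpr this)
          simpa [hg0] using this
    have : muVec G g h x d.fst = 0 := congrFun hzero d.fst
    linarith
end

section
/- (Theorem 1, convergence of a stochastic drift recursion to a set) Let C ⊆ ℝ^N be nonempty and closed, and let X(t), t ∈ ℕ, be an (F_t)-adapted ℝ^N-valued process on (Ω, F, P). Suppose: (i) V : ℝ^N → [0,∞) is continuous, V(x) = 0 for x ∈ C, V(x) > 0 for x ∉ C, for every ε > 0 one has inf{V(x) : dist(x, C) ≥ ε} > 0, and for every δ > 0 there exists ε > 0 such that dist(x, C) ≤ ε implies V(x) ≤ δ; (ii) φ : ℝ^N → [0,∞) is Borel measurable, φ(x) = 0 for x ∈ C, and for every ε > 0 one has inf{φ(x) : dist(x, C) ≥ ε} > 0; (iii) E[V(X(0))]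 < ∞ and there exist a constant m > 0 and sequences γ(t) > 0, ζ(t) > 0 with Σ_t γ(t) = ∞ and Σ_t ζ(t) < ∞, such that for every t, almost surely E[V(X(t+1)) | F_t] − V(X(t)) ≤ −γ(t)·φ(X(t)) + m·ζ(t)·(1 + V(X(t))). Then almost surely dist(X(t), C) → 0 as t → ∞, i.e., P[ lim_{t→∞} inf_{z ∈ C} ‖X(t) − z‖ = 0 ] = 1. -/
/-!
Robbins–Siegmund argument. With `Y t = V (X t)`, `q t = γ t * φ (X t)` and `a t = m * ζ t` the
drift condition reads `E[Y (t+1) | F t] ≤ (1 + a t) * Y t - q t + a t`. Discounting by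
`α t = ∏_{s<t} (1 + a s)⁻¹`, which stays between `exp (-∑ a)` and `1`, turns
`α t * Y t + ∑_{s<t} α (s+1) * (q s - a s)` into a supermartingale bounded below, hence a.s.
convergent. So almost surely `Y t` converges and `∑ γ t * φ (X t) < ∞`. Since `∑ γ t = ∞`,
`φ (X t)`, and with it `dist (X t, C)`, is frequently small; this forces `lim V (X t) = 0`, and
then `dist (X t, C) → 0`.
-/

open MeasureTheory Filter Finset Topology

section

variable {Ω : Type*} {m0 : MeasurableSpace Ω} {P : Measure Ω} {F : Filtration ℕ m0}

theorem MeasureTheory.Supermartingale.exists_ae_tendsto_of_ae_const_le [IsFiniteMeasure P]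
    {M : ℕ → Ω → ℝ} (hM : Supermartingale M F P) {B : ℝ} (hB : ∀ t, ∀ᵐ ω ∂P, B ≤ M t ω) :
    ∀ᵐ ω ∂P, ∃ c, Tendsto (fun t => M t ω) atTop (𝓝 c) := by
  set K := |B| - B
  have hL1 : ∀ t, ∫ ω, ‖M t ω‖ ∂P ≤ ∫ ω, M 0 ω ∂P + P.real Set.univ * K := by
    intro t
    -- `|M| ≤ (M - B) + |B|` because `M - B ≥ 0`
    have hle : ∫ ω, ‖M t ω‖ ∂P ≤ ∫ ω, (M t ω + K) ∂P := by
      refine integral_mono_ae (hM.integrable t).norm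
        ((hM.integrable t).add (integrable_const K)) ?_
      filter_upwards [hB t] with ω hω
      rw [Real.norm_eq_abs, abs_le]
      constructor <;> linarith [le_abs_self B, neg_abs_le B]
    have hmono : ∫ ω, M t ω ∂P ≤ ∫ ω, M 0 ω ∂P := by
      simpa only [setIntegral_univ] using hM.setIntegral_le (Nat.zero_le t) MeasurableSet.univ
    rw [integral_add (hM.integrable t) (integrable_const K), integral_const, smul_eq_mul] at hle
    linarith
  obtain ⟨R, hR⟩ : ∃ R : NNReal, ∀ t, eLpNorm ((-M) t) 1 P ≤ R := by
    refine ⟨(∫ ω, M 0 ω ∂P + P.real Set.univ * K).toNNReal, fun t => ?_⟩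
    rw [Pi.neg_apply, eLpNorm_neg, eLpNorm_one_eq_lintegral_enorm,
      ← ofReal_integral_norm_eq_lintegral_enorm (hM.integrable t)]
    exact ENNReal.ofReal_le_ofReal (hL1 t)
  filter_upwards [hM.neg.exists_ae_tendsto_of_bdd hR] with ω ⟨c, hc⟩
  exact ⟨-c, by simpa using hc.neg⟩

namespace RobbinsSiegmund

noncomputable def discount (a : ℕ → ℝ) (t : ℕ) : ℝ := (∏ s ∈ range t, (1 + a s))⁻¹

variable {a b : ℕ → ℝ} {Y q : ℕ → Ω → ℝ}

lemma one_le_prod_one_add (ha : ∀ t, 0 ≤ a t) (t : ℕ) : 1 ≤ ∏ s ∈ range t, (1 + a s) :=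
  Finset.one_le_prod fun s _ => le_add_of_nonneg_right (ha s)

lemma discount_pos (ha : ∀ t, 0 ≤ a t) (t : ℕ) : 0 < discount a t :=
  inv_pos.2 (zero_lt_one.trans_le (one_le_prod_one_add ha t))

lemma discount_le_one (ha : ∀ t, 0 ≤ a t) (t : ℕ) : discount a t ≤ 1 :=
  inv_le_one_of_one_le₀ (one_le_prod_one_add ha t)

lemma discount_succ_mul (ha : ∀ t, 0 ≤ a t) (t : ℕ) :
    discount a (t + 1) * (1 + a t) = discount a t := by
  have : 1 + a t ≠ 0 := by linarith [ha t]
  rw [discount, discount, prod_range_succ, mul_inv, mul_assoc, inv_mul_cancel₀ this, mul_one]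

lemma inv_discount_le_exp_tsum (ha : ∀ t, 0 ≤ a t) (hsum : Summable a) (t : ℕ) :
    (discount a t)⁻¹ ≤ Real.exp (∑' s, a s) := by
  rw [discount, inv_inv]
  exact (Real.prod_one_add_le_exp_sum _ ha).trans
    (Real.exp_le_exp.2 (hsum.sum_le_tsum _ fun s _ => ha s))

lemma tendsto_inv_discount (hsum : Summable a) :
    Tendsto (fun t => (discount a t)⁻¹) atTop (𝓝 (∏' s, (1 + a s))) := by
  simpa only [discount, inv_inv] using
    (Real.multipliable_one_add_of_summable hsum).tendsto_prod_tprod_nat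

noncomputable def process (a b : ℕ → ℝ) (Y q : ℕ → Ω → ℝ) (t : ℕ) (ω : Ω) : ℝ :=
  discount a t * Y t ω + ∑ s ∈ range t, discount a (s + 1) * (q s ω - b s)

lemma integrable_of_drift [IsFiniteMeasure P] (hYint : ∀ t, Integrable (Y t) P)
    (hq : StronglyAdapted F q) (hqnn : ∀ t ω, 0 ≤ q t ω)
    (hdrift : ∀ t, P[Y (t + 1)|F t] ≤ᵐ[P] fun ω => (1 + a t) * Y t ω - q t ω + b t) (t : ℕ) :
    Integrable (q t) P := by
  refine Integrable.mono' (g := fun ω => (1 + a t) * Y t ω + b t - P[Y (t + 1)|F t] ω)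
    ((((hYint t).const_mul _).add (integrable_const _)).sub integrable_condExp)
    ((hq t).mono (F.le t)).aestronglyMeasurable ?_
  filter_upwards [hdrift t] with ω hω
  rw [Real.norm_eq_abs, abs_of_nonneg (hqnn t ω)]
  linarith

lemma supermartingale_process [IsFiniteMeasure P] (ha : ∀ t, 0 ≤ a t)
    (hY : StronglyAdapted F Y) (hq : StronglyAdapted F q)
    (hYint : ∀ t, Integrable (Y t) P) (hqint : ∀ t, Integrable (q t) P)
    (hdrift : ∀ t, P[Y (t + 1)|F t] ≤ᵐ[P] fun ω => (1 + a t) * Y t ω - q t ω + b t) :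
    Supermartingale (process a b Y q) F P := by
  set S : ℕ → Ω → ℝ := fun t ω => ∑ s ∈ range t, discount a (s + 1) * (q s ω - b s)
  have hS_meas : ∀ t u, t ≤ u + 1 → StronglyMeasurable[F u] (S t) := fun t u htu =>
    Finset.stronglyMeasurable_fun_sum _ fun s hs =>
      (((hq s).mono (F.mono (by grind))).sub stronglyMeasurable_const).const_mul _
  have hS_int : ∀ t, Integrable (S t) P := fun t =>
    integrable_finsetSum _ fun s _ => ((hqint s).sub (integrable_const _)).const_mul _
  refine supermartingale_nat (fun t => ((hY t).const_mul _).add (hS_meas t t t.le_succ))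
    (fun t => ((hYint t).const_mul _).add (hS_int t)) fun t => ?_
  have hcond : P[process a b Y q (t + 1)|F t]
      =ᵐ[P] discount a (t + 1) • P[Y (t + 1)|F t] + S (t + 1) := by
    have hsplit : process a b Y q (t + 1) = discount a (t + 1) • Y (t + 1) + S (t + 1) := rfl
    rw [hsplit]
    filter_upwards [condExp_add ((hYint _).smul (discount a (t + 1))) (hS_int _) (F t),
      condExp_smul (discount a (t + 1)) (Y (t + 1)) (F t)] with ω hsum hsmul
    rw [hsum, Pi.add_apply, hsmul,
      condExp_of_stronglyMeasurable (F.le t) (hS_meas _ t le_rfl) (hS_int _), Pi.add_apply]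
  filter_upwards [hcond, hdrift t] with ω hω hd
  have hS_succ : S (t + 1) ω = S t ω + discount a (t + 1) * (q t ω - b t) := sum_range_succ _ _
  rw [hω, Pi.add_apply, Pi.smul_apply, smul_eq_mul, hS_succ]
  calc discount a (t + 1) * P[Y (t + 1)|F t] ω + (S t ω + discount a (t + 1) * (q t ω - b t))
      ≤ discount a (t + 1) * ((1 + a t) * Y t ω - q t ω + b t)
          + (S t ω + discount a (t + 1) * (q t ω - b t)) := by
        gcongr
        exact (discount_pos ha _).le
    _ = process a b Y q t ω := by
        rw [process, ← discount_succ_mul ha t]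
        ring

lemma neg_tsum_le_process (ha : ∀ t, 0 ≤ a t) (hb : ∀ t, 0 ≤ b t) (hbsum : Summable b)
    {ω : Ω} (hYnn : ∀ t, 0 ≤ Y t ω) (hqnn : ∀ t, 0 ≤ q t ω) (t : ℕ) :
    -∑' s, b s ≤ process a b Y q t ω := by
  calc -∑' s, b s ≤ ∑ s ∈ range t, -b s := by
        rw [sum_neg_distrib, neg_le_neg_iff]
        exact hbsum.sum_le_tsum _ fun s _ => hb s
    _ ≤ ∑ s ∈ range t, discount a (s + 1) * (q s ω - b s) := by
        refine sum_le_sum fun s _ => ?_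
        nlinarith [discount_pos ha (s + 1), discount_le_one ha (s + 1), hb s, hqnn s]
    _ ≤ process a b Y q t ω :=
        le_add_of_nonneg_left (mul_nonneg (discount_pos ha t).le (hYnn t))

lemma tendsto_and_summable_of_tendsto_process (ha : ∀ t, 0 ≤ a t) (hasum : Summable a)
    (hb : ∀ t, 0 ≤ b t) (hbsum : Summable b) {ω : Ω} (hYnn : ∀ t, 0 ≤ Y t ω)
    (hqnn : ∀ t, 0 ≤ q t ω) {L : ℝ} (hL : Tendsto (fun t => process a b Y q t ω) atTop (𝓝 L)) :
    (∃ c, Tendsto (fun t => Y t ω) atTop (𝓝 c)) ∧ Summable fun t => q t ω := by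
  set w : ℕ → ℝ := fun s => discount a (s + 1)
  have hw : ∀ s, 0 < w s := fun s => discount_pos ha (s + 1)
  have hwb : Summable fun s => w s * b s :=
    hbsum.of_nonneg_of_le (fun s => mul_nonneg (hw s).le (hb s))
      fun s => mul_le_of_le_one_left (hb s) (discount_le_one ha (s + 1))
  have hU : Tendsto (fun t => process a b Y q t ω + ∑ s ∈ range t, w s * b s) atTop
      (𝓝 (L + ∑' s, w s * b s)) :=
    hL.add hwb.tendsto_sum_tsum_nat
  have hdecomp : ∀ t, ∑ s ∈ range t, w s * q s ω
      = (process a b Y q t ω + ∑ s ∈ range t, w s * b s) - discount a t * Y t ω := by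
    intro t
    simp only [process, w, mul_sub, sum_sub_distrib]
    ring
  have hwq : Summable fun s => w s * q s ω := by
    obtain ⟨c, hc⟩ := hU.bddAbove_range
    refine summable_of_sum_range_le (c := c) (fun s => mul_nonneg (hw s).le (hqnn s)) fun t => ?_
    rw [hdecomp]
    linarith [hc ⟨t, rfl⟩, mul_nonneg (discount_pos ha t).le (hYnn t)]
  constructor
  · have hdY : Tendsto (fun t => discount a t * Y t ω) atTop
        (𝓝 ((L + ∑' s, w s * b s) - ∑' s, w s * q s ω)) :=
      (hU.sub hwq.tendsto_sum_tsum_nat).congr fun t => by rw [hdecomp]; ring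
    refine ⟨_, ((tendsto_inv_discount hasum).mul hdY).congr fun t => ?_⟩
    rw [← mul_assoc, inv_mul_cancel₀ (discount_pos ha t).ne', one_mul]
  · refine (hwq.mul_left (Real.exp (∑' s, a s))).of_nonneg_of_le (hqnn ·) fun s => ?_
    calc q s ω = (w s)⁻¹ * (w s * q s ω) := by
          rw [← mul_assoc, inv_mul_cancel₀ (hw s).ne', one_mul]
      _ ≤ Real.exp (∑' s, a s) * (w s * q s ω) :=
        mul_le_mul_of_nonneg_right (inv_discount_le_exp_tsum ha hasum _)
          (mul_nonneg (hw s).le (hqnn s))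

end RobbinsSiegmund

open RobbinsSiegmund in
theorem robbinsSiegmund [IsFiniteMeasure P] {a b : ℕ → ℝ} {Y q : ℕ → Ω → ℝ}
    (ha : ∀ t, 0 ≤ a t) (hasum : Summable a) (hb : ∀ t, 0 ≤ b t) (hbsum : Summable b)
    (hY : StronglyAdapted F Y) (hq : StronglyAdapted F q)
    (hYnn : ∀ t ω, 0 ≤ Y t ω) (hqnn : ∀ t ω, 0 ≤ q t ω) (hYint : ∀ t, Integrable (Y t) P)
    (hdrift : ∀ t, P[Y (t + 1)|F t] ≤ᵐ[P] fun ω => (1 + a t) * Y t ω - q t ω + b t) :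
    ∀ᵐ ω ∂P, (∃ c, Tendsto (fun t => Y t ω) atTop (𝓝 c)) ∧ Summable fun t => q t ω := by
  have hM := supermartingale_process ha hY hq hYint
    (integrable_of_drift hYint hq hqnn hdrift) hdrift
  filter_upwards [hM.exists_ae_tendsto_of_ae_const_le fun t => ae_of_all P fun ω =>
    neg_tsum_le_process ha hb hbsum (hYnn · ω) (hqnn · ω) t] with ω ⟨L, hL⟩
  exact tendsto_and_summable_of_tendsto_process ha hasum hb hbsum (hYnn · ω) (hqnn · ω) hL

lemma frequently_lt_of_summable_mul {γ f : ℕ → ℝ} (hγ : ∀ t, 0 ≤ γ t) (hγdiv : ¬Summable γ)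
    (hsum : Summable fun t => γ t * f t) {δ : ℝ} (hδ : 0 < δ) : ∃ᶠ t in atTop, f t < δ := by
  refine fun hge => hγdiv ((hsum.mul_left δ⁻¹).of_norm_bounded_eventually_nat ?_)
  filter_upwards [hge] with t ht
  rw [Real.norm_eq_abs, abs_of_nonneg (hγ t), le_inv_mul_iff₀ hδ, mul_comm δ]
  exact mul_le_mul_of_nonneg_left (not_lt.1 ht) (hγ t)

section InfDist

variable {E : Type*} [PseudoMetricSpace E] {C : Set E} {V : E → ℝ} {x : ℕ → E}

lemma eq_zero_of_tendsto_of_frequently_infDist_le (hVnonneg : ∀ x, 0 ≤ V x)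
    (hVsmall : ∀ δ > (0 : ℝ), ∃ ε > (0 : ℝ), ∀ x, Metric.infDist x C ≤ ε → V x ≤ δ)
    (hfreq : ∀ ε > (0 : ℝ), ∃ᶠ t in atTop, Metric.infDist (x t) C ≤ ε) {ℓ : ℝ}
    (hℓ : Tendsto (fun t => V (x t)) atTop (𝓝 ℓ)) : ℓ = 0 := by
  refine le_antisymm (le_of_forall_pos_le_add fun η hη => ?_)
    (ge_of_tendsto' hℓ fun t => hVnonneg _)
  obtain ⟨ε, hε, hεV⟩ := hVsmall η hη
  rw [zero_add]
  exact le_of_tendsto_of_frequently hℓ ((hfreq ε hε).mono fun t ht => hεV _ ht)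

lemma tendsto_infDist_zero_of_tendsto_zero
    (hVinf : ∀ ε > (0 : ℝ), ∃ δ > (0 : ℝ), ∀ x, ε ≤ Metric.infDist x C → δ ≤ V x)
    (hV : Tendsto (fun t => V (x t)) atTop (𝓝 0)) :
    Tendsto (fun t => Metric.infDist (x t) C) atTop (𝓝 0) := by
  refine tendsto_order.2 ⟨fun ε hε => .of_forall fun t => hε.trans_le Metric.infDist_nonneg,
    fun ε hε => ?_⟩
  obtain ⟨δ, hδ, hδV⟩ := hVinf ε hε
  filter_upwards [hV.eventually (eventually_lt_nhds hδ)] with t ht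
  exact lt_of_not_ge fun hge => (hδV _ hge).not_gt ht

end InfDist

end

theorem stmt4_general {N : ℕ} {Ω : Type*} {m0 : MeasurableSpace Ω}
    (P : Measure Ω) [IsProbabilityMeasure P] (F : Filtration ℕ m0)
    (C : Set (EuclideanSpace ℝ (Fin N)))
    (X : ℕ → Ω → EuclideanSpace ℝ (Fin N)) (hXadapted : Adapted F X)
    (V : EuclideanSpace ℝ (Fin N) → ℝ)
    (hVcont : Continuous V) (hVnonneg : ∀ x, 0 ≤ V x)
    (hVinf : ∀ ε > (0 : ℝ), ∃ δ > (0 : ℝ), ∀ x, ε ≤ Metric.infDist x C → δ ≤ V x)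
    (hVsmall : ∀ δ > (0 : ℝ), ∃ ε > (0 : ℝ), ∀ x, Metric.infDist x C ≤ ε → V x ≤ δ)
    (φ : EuclideanSpace ℝ (Fin N) → ℝ) (hφmeas : Measurable φ) (hφnonneg : ∀ x, 0 ≤ φ x)
    (hφinf : ∀ ε > (0 : ℝ), ∃ δ > (0 : ℝ), ∀ x, ε ≤ Metric.infDist x C → δ ≤ φ x)
    (m : ℝ) (hm : 0 < m) (γ ζ : ℕ → ℝ) (hγpos : ∀ t, 0 < γ t) (hζpos : ∀ t, 0 < ζ t)
    (hγdiv : ¬ Summable γ) (hζsum : Summable ζ)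
    (hVint : ∀ t, Integrable (fun ω => V (X t ω)) P)
    (hdrift : ∀ t, ∀ᵐ ω ∂P,
      (P[fun ω => V (X (t + 1) ω)|F t]) ω - V (X t ω)
        ≤ -(γ t) * φ (X t ω) + m * ζ t * (1 + V (X t ω))) :
    ∀ᵐ ω ∂P, Tendsto (fun t => Metric.infDist (X t ω) C) atTop (nhds 0) := by
  have hmζ : ∀ t, 0 ≤ m * ζ t := fun t => (mul_pos hm (hζpos t)).le
  have hY : StronglyAdapted F fun t ω => V (X t ω) := fun t =>
    (hVcont.measurable.comp (hXadapted t)).stronglyMeasurable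
  have hq : StronglyAdapted F fun t ω => γ t * φ (X t ω) := fun t =>
    ((hφmeas.comp (hXadapted t)).const_mul (γ t)).stronglyMeasurable
  have hq_nonneg : ∀ t ω, 0 ≤ γ t * φ (X t ω) := fun t ω =>
    mul_nonneg (hγpos t).le (hφnonneg _)
  have hdrift' : ∀ t, P[fun ω => V (X (t + 1) ω)|F t] ≤ᵐ[P]
      fun ω => (1 + m * ζ t) * V (X t ω) - γ t * φ (X t ω) + m * ζ t := fun t => by
    filter_upwards [hdrift t] with ω hω
    linarith
  filter_upwards [robbinsSiegmund hmζ (hζsum.mul_left m) hmζ (hζsum.mul_left m) hY hq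
    (fun t ω => hVnonneg _) hq_nonneg hVint hdrift'] with ω ⟨⟨ℓ, hℓ⟩, hsum⟩
  have hfreq : ∀ ε > (0 : ℝ), ∃ᶠ t in atTop, Metric.infDist (X t ω) C ≤ ε := fun ε hε => by
    obtain ⟨δ, hδ, hδφ⟩ := hφinf ε hε
    exact (frequently_lt_of_summable_mul (hγpos · |>.le) hγdiv hsum hδ).mono
      fun t ht => (lt_of_not_ge fun hge => (hδφ _ hge).not_gt ht).le
  have hℓ0 := eq_zero_of_tendsto_of_frequently_infDist_le hVnonneg hVsmall hfreq hℓ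
  exact tendsto_infDist_zero_of_tendsto_zero hVinf (hℓ0 ▸ hℓ)

/-- Theorem 1: convergence of a stochastic drift recursion to a set.
Let `C ⊆ ℝ^N` be nonempty and closed, and `X t` an `(F t)`-adapted `ℝ^N`-valued process.
Given a continuous potential `V ≥ 0` vanishing exactly on `C` (with the uniformity
conditions (i)), a measurable `φ ≥ 0` vanishing on `C` with positive infimum away from `C`,
and the drift inequality (iii) with `∑ γ = ∞`, `∑ ζ < ∞`, the process converges to `C`
almost surely: `dist(X t, C) → 0` a.s. -/
theorem stmt4 {N : ℕ} {Ω : Type*} {m0 : MeasurableSpace Ω}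
    (P : Measure Ω) [IsProbabilityMeasure P] (F : Filtration ℕ m0)
    (C : Set (EuclideanSpace ℝ (Fin N))) (hCne : C.Nonempty) (hCcl : IsClosed C)
    (X : ℕ → Ω → EuclideanSpace ℝ (Fin N)) (hXadapted : Adapted F X)
    (V : EuclideanSpace ℝ (Fin N) → ℝ)
    (hVcont : Continuous V) (hVnonneg : ∀ x, 0 ≤ V x)
    (hVzero : ∀ x ∈ C, V x = 0) (hVpos : ∀ x ∉ C, 0 < V x)
    (hVinf : ∀ ε > (0 : ℝ), ∃ δ > (0 : ℝ), ∀ x, ε ≤ Metric.infDist x C → δ ≤ V x)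
    (hVsmall : ∀ δ > (0 : ℝ), ∃ ε > (0 : ℝ), ∀ x, Metric.infDist x C ≤ ε → V x ≤ δ)
    (φ : EuclideanSpace ℝ (Fin N) → ℝ) (hφmeas : Measurable φ) (hφnonneg : ∀ x, 0 ≤ φ x)
    (hφzero : ∀ x ∈ C, φ x = 0)
    (hφinf : ∀ ε > (0 : ℝ), ∃ δ > (0 : ℝ), ∀ x, ε ≤ Metric.infDist x C → δ ≤ φ x)
    (m : ℝ) (hm : 0 < m) (γ ζ : ℕ → ℝ) (hγpos : ∀ t, 0 < γ t) (hζpos : ∀ t, 0 < ζ t)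
    (hγdiv : ¬ Summable γ) (hζsum : Summable ζ)
    (hVint : ∀ t, Integrable (fun ω => V (X t ω)) P)
    (hdrift : ∀ t, ∀ᵐ ω ∂P,
      (P[fun ω => V (X (t + 1) ω)|F t]) ω - V (X t ω)
        ≤ -(γ t) * φ (X t ω) + m * ζ t * (1 + V (X t ω))) :
    ∀ᵐ ω ∂P, Tendsto (fun t => Metric.infDist (X t ω) C) atTop (nhds 0) :=
  stmt4_general P F C X hXadapted V hVcont hVnonneg hVinf hVsmall φ hφmeas hφnonneg hφinf m hm γ ζ
    hγpos hζpos hγdiv hζsum hVint hdrift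
end

section
/- Let n be a real-valued random variable such that n and −n have the same distribution, and let f : ℝ → ℝ be Borel measurable, bounded, odd and strictly increasing. Define g(x) := E[f(x + n)] for x ∈ ℝ. Then g is odd, strictly increasing, and satisfies g(0) = 0. -/
open MeasureTheory

/-- if `n` is a real random variable with `n` and `−n` identically
distributed, and `f : ℝ → ℝ` is Borel measurable, bounded, odd and strictly increasing,
then `g(x) := E[f(x + n)]` is odd, strictly increasing, and `g 0 = 0`. -/
theorem stmt9 {Ω : Type*} [MeasurableSpace Ω] (P : Measure Ω) [IsProbabilityMeasure P]
    (n : Ω → ℝ) (hn : Measurable n)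
    (hsym : Measure.map n P = Measure.map (fun ω => -n ω) P)
    (f : ℝ → ℝ) (hfmeas : Measurable f) (hfbdd : ∃ Cf : ℝ, ∀ y, |f y| ≤ Cf)
    (hfodd : ∀ y : ℝ, f (-y) = -f y) (hfmono : StrictMono f) :
    (∀ x : ℝ, (∫ ω, f (-x + n ω) ∂P) = -∫ ω, f (x + n ω) ∂P) ∧
    StrictMono (fun x : ℝ => ∫ ω, f (x + n ω) ∂P) ∧
    (∫ ω, f (0 + n ω) ∂P) = 0 := by
  obtain ⟨Cf, hCf⟩ := hfbdd
  have hint : ∀ x : ℝ, Integrable (fun ω => f (x + n ω)) P := by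
    intro x
    refine Integrable.mono' (integrable_const Cf)
      ((hfmeas.comp ((measurable_const.add hn))).aestronglyMeasurable) ?_
    filter_upwards with ω using by simpa using hCf (x + n ω)
  have hodd : ∀ x : ℝ, (∫ ω, f (-x + n ω) ∂P) = -∫ ω, f (x + n ω) ∂P := by
    intro x
    have hm : Measurable fun y : ℝ => f (-x + y) :=
      hfmeas.comp (measurable_const.add measurable_id)
    have h1 : (∫ ω, f (-x + n ω) ∂P) = ∫ y, f (-x + y) ∂(Measure.map n P) :=
      (integral_map hn.aemeasurable hm.aestronglyMeasurable).symm
    have h2 : (∫ y, f (-x + y) ∂(Measure.map (fun ω => -n ω) P))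
        = ∫ ω, f (-x + -n ω) ∂P :=
      integral_map (hn.neg).aemeasurable hm.aestronglyMeasurable
    have h3 : ∀ ω, f (-x + -n ω) = -f (x + n ω) := by
      intro ω
      rw [show (-x + -n ω) = -(x + n ω) by ring, hfodd]
    rw [h1, hsym, h2]
    simp_rw [h3]
    rw [integral_neg]
  refine ⟨hodd, ?_, ?_⟩
  · intro a b hab
    simp only
    have hle : ∀ ω, f (a + n ω) ≤ f (b + n ω) := fun ω =>
      (hfmono (by linarith)).le
    have hpos : 0 < ∫ ω, (f (b + n ω) - f (a + n ω)) ∂P := by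
      refine (integral_pos_iff_support_of_nonneg
        (f := fun ω => f (b + n ω) - f (a + n ω))
        (fun ω => by simpa using hle ω) ((hint b).sub (hint a))).mpr ?_
      have : (Function.support fun ω => f (b + n ω) - f (a + n ω)) = Set.univ := by
        ext ω
        simp [sub_ne_zero, (hfmono (show a + n ω < b + n ω by linarith)).ne']
      simp [this]
    have := integral_sub (hint b) (hint a)
    rw [this] at hpos
    linarith
  · have h := hodd 0
    simp only [neg_zero] at h
    linarith
end

section
/- (Optimization of the asymptotic covariance norm over the step-size parameter) Let N be an integer with N ≥ 1, and let c > 0 and σ² > 0 be real constants. Consider the function F(a) := max( N·a²·σ², a²·σ²/(2ac − 1) ) defined for a ∈ (1/(2c), ∞). Then F attains its minimum over (1/(2c), ∞) uniquely at a* = (N+1)/(2Nc), and the minimum value is F(a*) = σ²·(N+1)²/(4N·c²); equivalently, F(a) > F(a*) for every a ∈ (1/(2c), ∞) with a ≠ a*. -/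
/-- Optimization of the asymptotic covariance norm over the step-size
parameter: for `N ≥ 1`, `c > 0`, `σ² > 0`, the function
`F(a) = max(N·a²·σ², a²·σ²/(2ac − 1))` on `(1/(2c), ∞)` attains its minimum uniquely at
`a* = (N+1)/(2Nc)`, with minimum value `F(a*) = σ²·(N+1)²/(4N·c²)`; equivalently,
`F(a) > F(a*)` for every `a ∈ (1/(2c), ∞)` with `a ≠ a*`. -/
theorem stmt13 (N : ℕ) (hN : 1 ≤ N) (c σ2 : ℝ) (hc : 0 < c) (hσ : 0 < σ2) :
    (max ((N : ℝ) * (((N : ℝ) + 1) / (2 * N * c)) ^ 2 * σ2)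
        ((((N : ℝ) + 1) / (2 * N * c)) ^ 2 * σ2 /
          (2 * (((N : ℝ) + 1) / (2 * N * c)) * c - 1))
      = σ2 * ((N : ℝ) + 1) ^ 2 / (4 * N * c ^ 2)) ∧
    ∀ a : ℝ, 1 / (2 * c) < a → a ≠ ((N : ℝ) + 1) / (2 * N * c) →
      σ2 * ((N : ℝ) + 1) ^ 2 / (4 * N * c ^ 2)
        < max ((N : ℝ) * a ^ 2 * σ2) (a ^ 2 * σ2 / (2 * a * c - 1)) := by
  have hn1 : (1 : ℝ) ≤ (N : ℝ) := by exact_mod_cast hN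
  have hn0 : (0 : ℝ) < (N : ℝ) := by linarith
  have hc0 : c ≠ 0 := ne_of_gt hc
  have hN0 : (N : ℝ) ≠ 0 := ne_of_gt hn0
  constructor
  · have h1 : (N : ℝ) * (((N : ℝ) + 1) / (2 * N * c)) ^ 2 * σ2
        = σ2 * ((N : ℝ) + 1) ^ 2 / (4 * N * c ^ 2) := by
      field_simp
      ring
    have hd : 2 * (((N : ℝ) + 1) / (2 * N * c)) * c - 1 = 1 / N := by
      field_simp
      ring
    have h2 : (((N : ℝ) + 1) / (2 * N * c)) ^ 2 * σ2 /
        (2 * (((N : ℝ) + 1) / (2 * N * c)) * c - 1)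
        = σ2 * ((N : ℝ) + 1) ^ 2 / (4 * N * c ^ 2) := by
      rw [hd]
      field_simp
      ring
    rw [h1, h2, max_self]
  · intro a ha hne
    have hden : 0 < 2 * a * c - 1 := by
      have : 1 / (2 * c) * (2 * c) < a * (2 * c) := by
        exact mul_lt_mul_of_pos_right ha (by linarith)
      rw [div_mul_cancel₀] at this
      · linarith
      · linarith
    rcases lt_or_gt_of_ne hne with hlt | hgt
    · refine lt_of_lt_of_le ?_ (le_max_right _ _)
      rw [div_lt_div_iff₀ (by positivity) hden]
      have ha2 : a < ((N : ℝ) + 1) / (2 * c) := by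
        calc a < ((N : ℝ) + 1) / (2 * N * c) := hlt
        _ ≤ ((N : ℝ) + 1) / (2 * c) := by
          apply div_le_div_of_nonneg_left (by linarith) (by linarith)
          nlinarith
      have h1 : 0 < ((N : ℝ) + 1) / (2 * N * c) - a := by linarith
      have h2 : 0 < ((N : ℝ) + 1) / (2 * c) - a := by linarith
      have key : 0 < 4 * N * c ^ 2 * ((((N : ℝ) + 1) / (2 * N * c) - a) * (((N : ℝ) + 1) / (2 * c) - a)) := by positivity
      have keq : 4 * N * c ^ 2 * ((((N : ℝ) + 1) / (2 * N * c) - a) * (((N : ℝ) + 1) / (2 * c) - a))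
          = 4 * N * c ^ 2 * a ^ 2 - 2 * ((N : ℝ) + 1) ^ 2 * a * c + ((N : ℝ) + 1) ^ 2 := by
        field_simp
        ring
      rw [keq] at key
      nlinarith [mul_pos hσ key]
    · refine lt_of_lt_of_le ?_ (le_max_left _ _)
      have hstar : 0 < ((N : ℝ) + 1) / (2 * N * c) := by positivity
      have : (((N : ℝ) + 1) / (2 * N * c)) ^ 2 < a ^ 2 := by
        nlinarith
      have heq : σ2 * ((N : ℝ) + 1) ^ 2 / (4 * N * c ^ 2)
          = (N : ℝ) * (((N : ℝ) + 1) / (2 * N * c)) ^ 2 * σ2 := by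
        field_simp
        ring
      rw [heq]
      have := mul_lt_mul_of_pos_left (mul_lt_mul_of_pos_right this hσ) hn0
      nlinarith [this]
end
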